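/- arXiv:1002.0231 — 4 statements merged into one kernel-verified Lean document; each statement's English description precedes it below -/
import Mathlib

section
/- Every matrix family of the second type solves the reflection equation for the N=3 Cremmer–Gervais R-matrix: for all b,F₁,F₂,G₁,G₂,G₃ ∈ ℂ, all q ∈ ℂ with q ≠ 0, q² ≠ 1, and every admissible pair (z₁,z₂), the function K(z) := K_II(z; b,F₁,F₂,G₁,G₂,G₃) satisfies R(z₁/z₂,q) K(z₁)₁ R₂₁(z₁z₂) K(z₂)₂ = K(z₂)₂ R(z₁z₂,q) K(z₁)₁ R₂₁(z₁/z₂). -/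
open Matrix Kronecker

/-- The `N = 3` Cremmer-Gervais `R`-matrix, rows indexed by pairs `(i,j)`,
columns by pairs `(k,l)`. -/
noncomputable def Rcg (z q : ℂ) : Matrix (Fin 3 × Fin 3) (Fin 3 × Fin 3) ℂ :=
  fun p r =>
    if p.1 = p.2 ∧ p.2 = r.1 ∧ r.1 = r.2 then
      (q * z⁻¹ - q⁻¹ * z) / ((q - q⁻¹) * (z - z⁻¹))
    else if p.1 = r.1 ∧ p.2 = r.2 ∧ p.1 ≠ p.2 then
      (if (r.2 : ℕ) < (r.1 : ℕ) then -q else -q⁻¹) / (q - q⁻¹)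
    else if r.2 = p.1 ∧ r.1 = p.2 ∧ p.1 ≠ p.2 then
      (if (r.1 : ℕ) < (r.2 : ℕ) then z else z⁻¹) / (z - z⁻¹)
    else if min (r.1 : ℕ) (r.2 : ℕ) < (p.1 : ℕ) ∧ (p.1 : ℕ) < max (r.1 : ℕ) (r.2 : ℕ)
        ∧ (p.1 : ℕ) + (p.2 : ℕ) = (r.1 : ℕ) + (r.2 : ℕ) then
      (if (r.1 : ℕ) < (r.2 : ℕ) then 1 else -1)
    else 0

/-- The flip matrix `P` with entries `P^{ij}_{kl} = δ_{il} δ_{jk}`. -/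
noncomputable def Pflip : Matrix (Fin 3 × Fin 3) (Fin 3 × Fin 3) ℂ :=
  fun p r => if p.1 = r.2 ∧ p.2 = r.1 then 1 else 0

/-- `R₂₁(z) = P R(z,q) P`. -/
noncomputable def R21 (z q : ℂ) : Matrix (Fin 3 × Fin 3) (Fin 3 × Fin 3) ℂ :=
  Pflip * Rcg z q * Pflip

/-- `M₁ = M ⊗ Id₃`. -/
noncomputable def Mleft (M : Matrix (Fin 3) (Fin 3) ℂ) :
    Matrix (Fin 3 × Fin 3) (Fin 3 × Fin 3) ℂ :=
  M ⊗ₖ (1 : Matrix (Fin 3) (Fin 3) ℂ)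

/-- `M₂ = Id₃ ⊗ M`. -/
noncomputable def Mright (M : Matrix (Fin 3) (Fin 3) ℂ) :
    Matrix (Fin 3 × Fin 3) (Fin 3 × Fin 3) ℂ :=
  (1 : Matrix (Fin 3) (Fin 3) ℂ) ⊗ₖ M

/-- `K` satisfies the reflection equation with parameter `q` at the pair `(z₁, z₂)`. -/
def ReflEq (q : ℂ) (K : ℂ → Matrix (Fin 3) (Fin 3) ℂ) (z₁ z₂ : ℂ) : Prop :=
  Rcg (z₁ / z₂) q * Mleft (K z₁) * R21 (z₁ * z₂) q * Mright (K z₂) =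
    Mright (K z₂) * Rcg (z₁ * z₂) q * Mleft (K z₁) * R21 (z₁ / z₂) q

/-- The matrix `T` with `T_{ij} = 1` iff `i + j = 2`. -/
noncomputable def Tmat : Matrix (Fin 3) (Fin 3) ℂ :=
  fun i j => if (i : ℕ) + (j : ℕ) = 2 then 1 else 0

noncomputable def KII0 (z F₁ G₁ G₂ G₃ : ℂ) : Matrix (Fin 3) (Fin 3) ℂ :=
  (-F₁) • !![G₃, 0, G₁ * (1 - z ^ 4); 0, G₃, G₂ * (1 - z ^ 4); 0, 0, G₃ * z ^ 4]

/-- The second family of `K`-matrices. -/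
noncomputable def KII (z b F₁ F₂ G₁ G₂ G₃ : ℂ) : Matrix (Fin 3) (Fin 3) ℂ :=
  (b * z ^ 2) • (1 : Matrix (Fin 3) (Fin 3) ℂ) + KII0 z F₁ G₁ G₂ G₃
    - z ^ 4 • (Tmat * KII0 z⁻¹ F₂ G₃ (-G₂) G₁ * Tmat)

/-! Clearing denominators, `R(x/y, q)` is `((q² - 1)(x² - y²))⁻¹` times a matrix whose entries are
linear in `x², y²` and `q²`, and `K_II(z)` is polynomial in `z²`. The scalar factors on the two
sides of the reflection equation agree, so it reduces to a polynomial identity in `z₁², z₂², q²`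
and the parameters, which holds over every commutative ring and is checked entry by entry. -/

section Kronecker

variable {R m n : Type*} [NonAssocSemiring R] [Fintype n] [DecidableEq n]

theorem mul_kronecker_one_apply (M : Matrix m (n × n) R) (K : Matrix n n R) (p : m)
    (r : n × n) :
    (M * (K ⊗ₖ (1 : Matrix n n R) : Matrix (n × n) (n × n) R) : Matrix m (n × n) R) p r =
      ∑ a, M p (a, r.2) * K a r.1 := by
  simp [mul_apply, Fintype.sum_prod_type, one_apply]

theorem mul_one_kronecker_apply (M : Matrix m (n × n) R) (K : Matrix n n R) (p : m)
    (r : n × n) :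
    (M * ((1 : Matrix n n R) ⊗ₖ K : Matrix (n × n) (n × n) R) : Matrix m (n × n) R) p r =
      ∑ a, M p (r.1, a) * K a r.2 := by
  simp [mul_apply, Fintype.sum_prod_type, one_apply]

theorem one_kronecker_mul_apply (M : Matrix (n × n) m R) (K : Matrix n n R) (p : n × n)
    (r : m) :
    (((1 : Matrix n n R) ⊗ₖ K : Matrix (n × n) (n × n) R) * M : Matrix (n × n) m R) p r =
      ∑ a, K p.2 a * M (p.1, a) r := by
  simp [mul_apply, Fintype.sum_prod_type, one_apply]

end Kronecker

section Polynomial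

variable {R : Type*} [CommRing R]

def cgNumerator (Q u v : R) : Matrix (Fin 3 × Fin 3) (Fin 3 × Fin 3) R :=
  of fun p r =>
    if p.1 = p.2 ∧ p.2 = r.1 ∧ r.1 = r.2 then Q * v - u
    else if p.1 = r.1 ∧ p.2 = r.2 ∧ p.1 ≠ p.2 then
      -(if (r.2 : ℕ) < (r.1 : ℕ) then Q else 1) * (u - v)
    else if r.2 = p.1 ∧ r.1 = p.2 ∧ p.1 ≠ p.2 then
      (if (r.1 : ℕ) < (r.2 : ℕ) then u else v) * (Q - 1)
    else if min (r.1 : ℕ) (r.2 : ℕ) < (p.1 : ℕ) ∧ (p.1 : ℕ) < max (r.1 : ℕ) (r.2 : ℕ)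
        ∧ (p.1 : ℕ) + (p.2 : ℕ) = (r.1 : ℕ) + (r.2 : ℕ) then
      (if (r.1 : ℕ) < (r.2 : ℕ) then 1 else -1) * ((Q - 1) * (u - v))
    else 0

def kIIPoly (b F₁ F₂ G₁ G₂ G₃ t : R) : Matrix (Fin 3) (Fin 3) R :=
  !![b * t - F₁ * G₃ + F₂ * G₁, 0, F₁ * G₁ * (t ^ 2 - 1);
     -F₂ * G₂ * (t ^ 2 - 1), b * t - F₁ * G₃ + F₂ * G₁ * t ^ 2, F₁ * G₂ * (t ^ 2 - 1);
     F₂ * G₃ * (t ^ 2 - 1), 0, b * t - (F₁ * G₃ - F₂ * G₁) * t ^ 2]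

set_option maxHeartbeats 0 in
theorem kIIPoly_reflection (Q b F₁ F₂ G₁ G₂ G₃ u₁ u₂ : R) :
    cgNumerator Q u₁ u₂ * (kIIPoly b F₁ F₂ G₁ G₂ G₃ u₁ ⊗ₖ 1)
        * (cgNumerator Q (u₁ * u₂) 1).submatrix Prod.swap Prod.swap
        * (1 ⊗ₖ kIIPoly b F₁ F₂ G₁ G₂ G₃ u₂) =
      (1 ⊗ₖ kIIPoly b F₁ F₂ G₁ G₂ G₃ u₂) * cgNumerator Q (u₁ * u₂) 1
        * (kIIPoly b F₁ F₂ G₁ G₂ G₃ u₁ ⊗ₖ 1)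
        * (cgNumerator Q u₁ u₂).submatrix Prod.swap Prod.swap := by
  ext ⟨i, j⟩ ⟨k, l⟩
  -- the Kronecker factors are expanded first, so that each entry is a sum of 81 terms, not 729
  simp only [↓mul_one_kronecker_apply, ↓mul_kronecker_one_apply, ↓one_kronecker_mul_apply,
    mul_apply, Fintype.sum_prod_type]
  fin_cases i <;> fin_cases j <;> fin_cases k <;> fin_cases l <;>
    simp [Fin.sum_univ_three, cgNumerator, kIIPoly] <;>
    ring

end Polynomial

theorem Pflip_eq_toMatrix : Pflip = (Equiv.prodComm (Fin 3) (Fin 3)).toPEquiv.toMatrix := by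
  ext p r
  simp only [Pflip, PEquiv.toMatrix_apply, Equiv.toPEquiv_apply, Option.mem_def,
    Option.some.injEq, Equiv.prodComm_apply, Prod.ext_iff, Prod.fst_swap, Prod.snd_swap]
  congr 1
  simp only [eq_comm, and_comm]

theorem R21_eq_submatrix (z q : ℂ) : R21 z q = (Rcg z q).submatrix Prod.swap Prod.swap := by
  rw [R21, Pflip_eq_toMatrix, PEquiv.toMatrix_toPEquiv_mul, PEquiv.mul_toMatrix_toPEquiv,
    submatrix_submatrix]
  rfl

theorem Rcg_div_eq {x y q : ℂ} (hx : x ≠ 0) (hy : y ≠ 0) (hq : q ≠ 0) (hq2 : q ^ 2 ≠ 1)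
    (hxy : x ^ 2 ≠ y ^ 2) :
    Rcg (x / y) q = ((q ^ 2 - 1) * (x ^ 2 - y ^ 2))⁻¹ • cgNumerator (q ^ 2) (x ^ 2) (y ^ 2) := by
  have hq2' : q ^ 2 - 1 ≠ 0 := sub_ne_zero.mpr hq2
  have hxy' : x ^ 2 - y ^ 2 ≠ 0 := sub_ne_zero.mpr hxy
  have hq_sub_inv : q - q⁻¹ = (q ^ 2 - 1) / q := by field_simp
  have hz_sub_inv : x / y - (x / y)⁻¹ = (x ^ 2 - y ^ 2) / (x * y) := by field_simp
  ext p r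
  simp only [Rcg, cgNumerator, of_apply, Matrix.smul_apply, smul_eq_mul, hq_sub_inv, hz_sub_inv]
  split_ifs <;> field_simp
  all_goals ring

theorem KII_eq_kIIPoly {z : ℂ} (hz : z ≠ 0) (b F₁ F₂ G₁ G₂ G₃ : ℂ) :
    KII z b F₁ F₂ G₁ G₂ G₃ = kIIPoly b F₁ F₂ G₁ G₂ G₃ (z ^ 2) := by
  ext i j
  fin_cases i <;> fin_cases j <;>
    simp [KII, KII0, kIIPoly, Tmat, Matrix.mul_apply, Fin.sum_univ_three, one_apply] <;>
    field_simp <;> ring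

/-- Every matrix of the second family solves the reflection equation. -/
theorem KII_solves_reflection_equation (b F₁ F₂ G₁ G₂ G₃ q : ℂ)
    (hq : q ≠ 0) (hq2 : q ^ 2 ≠ 1) (z₁ z₂ : ℂ) (hz₁ : z₁ ≠ 0) (hz₂ : z₂ ≠ 0)
    (hzz : z₁ ^ 2 ≠ z₂ ^ 2) (hz₁₂ : z₁ ^ 2 * z₂ ^ 2 ≠ 1) :
    ReflEq q (fun z => KII z b F₁ F₂ G₁ G₂ G₃) z₁ z₂ := by
  have hdiv := Rcg_div_eq hz₁ hz₂ hq hq2 hzz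
  have hmul : Rcg (z₁ * z₂) q = ((q ^ 2 - 1) * (z₁ ^ 2 * z₂ ^ 2 - 1))⁻¹ •
      cgNumerator (q ^ 2) (z₁ ^ 2 * z₂ ^ 2) 1 := by
    simpa [mul_pow] using
      Rcg_div_eq (mul_ne_zero hz₁ hz₂) one_ne_zero hq hq2 (by simpa [mul_pow] using hz₁₂)
  simp only [ReflEq, R21_eq_submatrix, hdiv, hmul, submatrix_smul, Pi.smul_apply,
    KII_eq_kIIPoly hz₁, KII_eq_kIIPoly hz₂, Mleft, Mright, Matrix.smul_mul, Matrix.mul_smul,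
    smul_smul, kIIPoly_reflection]
  rw [mul_comm]
end

section
/- Transformation of the second family under G-conjugation: for all b,F₁,F₂,G₁,G₂,G₃ ∈ ℂ, every ω ∈ ℂ with ω³ = 1, and every z ∈ ℂ with z ≠ 0, one has G · K_II(z; b,F₁,F₂,G₁,G₂,G₃) · G⁻¹ = K_II(z; b, ωF₁, F₂, G₁, ωG₂, ω²G₃), where G = diag(1, ω, ω²). -/
/-!
Conjugation by `G = diag(1, ω, ω²)` multiplies the `(i, j)` entry of a matrix by `ω ^ (i - j)`,
which on `K_{II,0}` amounts to a rescaling of its parameters. The flipped part `T K_{II,0} T` is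
handled by the same computation with `ω²` in place of `ω`, because `T G T = ω² G⁻¹`.
-/

open Matrix Kronecker

/-- `G = diag(1, ω, ω²)`. -/
noncomputable def Gmat (ω : ℂ) : Matrix (Fin 3) (Fin 3) ℂ :=
  Matrix.diagonal ![1, ω, ω ^ 2]

lemma KII0_mul_left (z c F A B C : ℂ) :
    KII0 z (c * F) A B C = KII0 z F (c * A) (c * B) (c * C) := by
  ext i j
  fin_cases i <;> fin_cases j <;> simp [KII0] <;> ring

lemma sq_sq_eq_self_of_pow_three_eq_one {M : Type*} [Monoid M] {ω : M} (hω : ω ^ 3 = 1) :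
    (ω ^ 2) ^ 2 = ω := by
  rw [← pow_mul, pow_succ, hω, one_mul]

section CubeRootOfUnity

variable {ω : ℂ} (hω : ω ^ 3 = 1)
include hω

lemma Gmat_sq_eq : Gmat (ω ^ 2) = diagonal ![1, ω ^ 2, ω] := by
  rw [Gmat, sq_sq_eq_self_of_pow_three_eq_one hω]

lemma Gmat_mul_Gmat_sq : Gmat ω * Gmat (ω ^ 2) = 1 := by
  rw [Gmat_sq_eq hω, Gmat, diagonal_mul_diagonal, ← diagonal_one]
  congr 1
  ext i
  fin_cases i <;> simp <;> grind

lemma Gmat_conj_KII0 (z F A B C : ℂ) :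
    Gmat ω * KII0 z F A B C * Gmat (ω ^ 2) = KII0 z F (ω * A) (ω ^ 2 * B) C := by
  rw [Gmat_sq_eq hω, Gmat]
  ext i j
  fin_cases i <;> fin_cases j <;> simp [KII0, diagonal_mul, mul_diagonal] <;> grind

lemma Gmat_sq_conj_KII0 (z F A B C : ℂ) :
    Gmat (ω ^ 2) * KII0 z F A B C * Gmat ω = KII0 z F (ω ^ 2 * A) (ω * B) C := by
  have h := Gmat_conj_KII0 (ω := ω ^ 2) (by rw [pow_right_comm, hω, one_pow]) z F A B C
  rwa [sq_sq_eq_self_of_pow_three_eq_one hω] at h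

lemma Gmat_mul_Tmat : Gmat ω * Tmat = ω ^ 2 • (Tmat * Gmat (ω ^ 2)) := by
  rw [Gmat_sq_eq hω, Gmat]
  ext i j
  fin_cases i <;> fin_cases j <;> simp [Tmat, diagonal_mul, mul_diagonal] <;> grind

/-- `G T = ω² T G⁻¹` and `T G⁻¹ = ω G T`, and the scalars cancel. -/
lemma Gmat_conj_Tmat_conj (M : Matrix (Fin 3) (Fin 3) ℂ) :
    Gmat ω * (Tmat * M * Tmat) * Gmat (ω ^ 2) =
      Tmat * (Gmat (ω ^ 2) * M * Gmat ω) * Tmat := by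
  have hTG : Tmat * Gmat (ω ^ 2) = ω • (Gmat ω * Tmat) := by
    rw [Gmat_mul_Tmat hω, smul_smul, ← pow_succ', hω, one_smul]
  calc Gmat ω * (Tmat * M * Tmat) * Gmat (ω ^ 2)
      = (Gmat ω * Tmat) * M * (Tmat * Gmat (ω ^ 2)) := by simp only [Matrix.mul_assoc]
    _ = (ω ^ 2 • (Tmat * Gmat (ω ^ 2))) * M * (ω • (Gmat ω * Tmat)) := by
      rw [← Gmat_mul_Tmat hω, ← hTG]
    _ = (ω * ω ^ 2) • (Tmat * (Gmat (ω ^ 2) * M * Gmat ω) * Tmat) := by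
      simp only [Matrix.smul_mul, Matrix.mul_smul, smul_smul, Matrix.mul_assoc]
    _ = Tmat * (Gmat (ω ^ 2) * M * Gmat ω) * Tmat := by
      rw [← pow_succ', hω, one_smul]

end CubeRootOfUnity

theorem KII_G_conjugation_general (b F₁ F₂ G₁ G₂ G₃ ω : ℂ) (hω : ω ^ 3 = 1)
    (z : ℂ) :
    Gmat ω * KII z b F₁ F₂ G₁ G₂ G₃ * Matrix.diagonal ![1, ω ^ 2, ω] =
      KII z b (ω * F₁) F₂ G₁ (ω * G₂) (ω ^ 2 * G₃) := by
  rw [← Gmat_sq_eq hω]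
  simp only [KII, Matrix.mul_add, Matrix.add_mul, Matrix.mul_sub, Matrix.sub_mul,
    Matrix.mul_smul, Matrix.smul_mul, Matrix.mul_one, Gmat_mul_Gmat_sq hω, Gmat_conj_KII0 hω,
    Gmat_conj_Tmat_conj hω, Gmat_sq_conj_KII0 hω, KII0_mul_left, mul_neg]
  have hG₃ : ω * (ω ^ 2 * G₃) = G₃ := by linear_combination G₃ * hω
  have hG₂ : ω * (ω * G₂) = ω ^ 2 * G₂ := by ring
  rw [hG₂, hG₃]

/-- Transformation of the second family under `G`-conjugation. -/
theorem KII_G_conjugation (b F₁ F₂ G₁ G₂ G₃ ω : ℂ) (hω : ω ^ 3 = 1)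
    (z : ℂ) (hz : z ≠ 0) :
    Gmat ω * KII z b F₁ F₂ G₁ G₂ G₃ * Matrix.diagonal ![1, ω ^ 2, ω] =
      KII z b (ω * F₁) F₂ G₁ (ω * G₂) (ω ^ 2 * G₃) :=
  KII_G_conjugation_general b F₁ F₂ G₁ G₂ G₃ ω hω z
end

section
/- T-conjugation combined with inversion of the spectral parameter maps reflection-equation solutions for parameter q to solutions for parameter q⁻¹: let q ∈ ℂ with q ≠ 0, q² ≠ 1. If K assigns a 3×3 complex matrix K(z) to each nonzero z ∈ ℂ and satisfies the reflection equation with parameter q at every admissible pair (z₁,z₂), then the function K'(z) := T K(z⁻¹) T satisfies the reflection equation with parameter q⁻¹ at every admissible pair (z₁,z₂). -/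
open Matrix Kronecker

/-! Conjugation by `T ⊗ T` reverses both tensor indices. On the Cremmer–Gervais matrix it
preserves the shape of every case of the definition but flips each sign `sgn(k - l)`, which gives
`R(z, q⁻¹) = -(T ⊗ T) R(z⁻¹, q) (T ⊗ T)`, and the same for `R₂₁` because `T ⊗ T` commutes with
the flip `P`. Since also `(T ⊗ T) M₁ (T ⊗ T) = (T M T)₁` and likewise for `M₂`, conjugating the
reflection equation for `K` at `(z₁⁻¹, z₂⁻¹)` by `T ⊗ T` yields, after the two signs on each side
cancel, the reflection equation with parameter `q⁻¹` for `z ↦ T K(z⁻¹) T` at `(z₁, z₂)`. -/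

lemma Tmat_mul_mul_Tmat (M : Matrix (Fin 3) (Fin 3) ℂ) :
    Tmat * M * Tmat = reindex Fin.revPerm Fin.revPerm M := by
  ext i j
  fin_cases i <;> fin_cases j <;> simp [Tmat, mul_apply, Fin.sum_univ_three]

lemma Pflip_mul_mul_Pflip (M : Matrix (Fin 3 × Fin 3) (Fin 3 × Fin 3) ℂ) :
    Pflip * M * Pflip = M.submatrix Prod.swap Prod.swap := by
  ext ⟨i, j⟩ ⟨k, l⟩
  simp [Pflip, mul_apply, Fintype.sum_prod_type, ite_and]

/-- Conjugation by `T ⊗ T`. -/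
noncomputable def conjTT (n : ℕ) :
    Matrix (Fin n × Fin n) (Fin n × Fin n) ℂ ≃ₐ[ℂ] Matrix (Fin n × Fin n) (Fin n × Fin n) ℂ :=
  reindexAlgEquiv ℂ ℂ (Fin.revPerm.prodCongr Fin.revPerm)

@[simp]
lemma conjTT_apply {n : ℕ} (M : Matrix (Fin n × Fin n) (Fin n × Fin n) ℂ) (i j k l : Fin n) :
    conjTT n M (i, j) (k, l) = M (i.rev, j.rev) (k.rev, l.rev) := by
  simp [conjTT, Fin.revPerm_symm]

lemma Mleft_Tmat_conj (M : Matrix (Fin 3) (Fin 3) ℂ) :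
    Mleft (Tmat * M * Tmat) = conjTT 3 (Mleft M) := by
  rw [Tmat_mul_mul_Tmat, conjTT, coe_reindexAlgEquiv, Mleft, Mleft, ← kroneckerMap_reindex,
    reindex_apply _ _ 1, submatrix_one_equiv]

lemma Mright_Tmat_conj (M : Matrix (Fin 3) (Fin 3) ℂ) :
    Mright (Tmat * M * Tmat) = conjTT 3 (Mright M) := by
  rw [Tmat_mul_mul_Tmat, conjTT, coe_reindexAlgEquiv, Mright, Mright, ← kroneckerMap_reindex,
    reindex_apply _ _ 1, submatrix_one_equiv]

lemma Rcg_inv_apply (z q : ℂ) (i j k l : Fin 3) :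
    Rcg z q⁻¹ (i, j) (k, l) = -Rcg z⁻¹ q (i.rev, j.rev) (k.rev, l.rev) := by
  simp only [Rcg, Fin.val_rev, inv_inv, ne_eq, Fin.ext_iff]
  have := i.isLt; have := j.isLt; have := k.isLt; have := l.isLt
  split_ifs <;> first | omega | ring1 | rw [← div_neg, neg_sub]

lemma Rcg_inv (z q : ℂ) : Rcg z q⁻¹ = -conjTT 3 (Rcg z⁻¹ q) := by
  ext ⟨i, j⟩ ⟨k, l⟩
  simp [Rcg_inv_apply]

lemma R21_inv (z q : ℂ) : R21 z q⁻¹ = -conjTT 3 (R21 z⁻¹ q) := by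
  ext ⟨i, j⟩ ⟨k, l⟩
  simp [R21, Pflip_mul_mul_Pflip, Rcg_inv_apply]

theorem T_conjugation_maps_reflection_solutions_general (q : ℂ)
    (K : ℂ → Matrix (Fin 3) (Fin 3) ℂ)
    (hK : ∀ z₁ z₂ : ℂ, z₁ ≠ 0 → z₂ ≠ 0 → z₁ ^ 2 ≠ z₂ ^ 2 → z₁ ^ 2 * z₂ ^ 2 ≠ 1 →
      ReflEq q K z₁ z₂) :
    ∀ z₁ z₂ : ℂ, z₁ ≠ 0 → z₂ ≠ 0 → z₁ ^ 2 ≠ z₂ ^ 2 → z₁ ^ 2 * z₂ ^ 2 ≠ 1 →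
      ReflEq q⁻¹ (fun z => Tmat * K z⁻¹ * Tmat) z₁ z₂ := by
  intro z₁ z₂ h₁ h₂ h₁₂ h₁₂'
  have hK' := hK z₁⁻¹ z₂⁻¹ (inv_ne_zero h₁) (inv_ne_zero h₂)
    (by rwa [inv_pow, inv_pow, ne_eq, _root_.inv_inj])
    (by rwa [inv_pow, inv_pow, ← mul_inv, inv_ne_one])
  rw [ReflEq, inv_div_inv, ← mul_inv] at hK'
  simp only [ReflEq, Mleft_Tmat_conj, Mright_Tmat_conj, Rcg_inv, R21_inv, inv_div, neg_mul,
    mul_neg, neg_neg, ← map_mul]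
  exact congrArg (conjTT 3) hK'

/-- `T`-conjugation combined with inversion of the spectral parameter maps
solutions for parameter `q` to solutions for parameter `q⁻¹`. -/
theorem T_conjugation_maps_reflection_solutions (q : ℂ) (hq : q ≠ 0) (hq2 : q ^ 2 ≠ 1)
    (K : ℂ → Matrix (Fin 3) (Fin 3) ℂ)
    (hK : ∀ z₁ z₂ : ℂ, z₁ ≠ 0 → z₂ ≠ 0 → z₁ ^ 2 ≠ z₂ ^ 2 → z₁ ^ 2 * z₂ ^ 2 ≠ 1 →
      ReflEq q K z₁ z₂) :
    ∀ z₁ z₂ : ℂ, z₁ ≠ 0 → z₂ ≠ 0 → z₁ ^ 2 ≠ z₂ ^ 2 → z₁ ^ 2 * z₂ ^ 2 ≠ 1 →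
      ReflEq q⁻¹ (fun z => Tmat * K z⁻¹ * Tmat) z₁ z₂ :=
  T_conjugation_maps_reflection_solutions_general q K hK
end

section
/- Four entries of the reflection-equation difference vanish identically for arbitrary matrices: for all q, z₁, z₂ ∈ ℂ with q ≠ 0, q² ≠ 1, z₁ ≠ 0, z₂ ≠ 0, z₁² ≠ z₂², z₁²z₂² ≠ 1, and for all 3×3 complex matrices A and B, the 9×9 matrix D := R(z₁/z₂,q) A₁ R₂₁(z₁z₂) B₂ − B₂ R(z₁z₂,q) A₁ R₂₁(z₁/z₂) has vanishing entries in row (0,0) column (1,1), row (0,0) column (2,2), row (2,2) column (1,1), and row (2,2) column (0,0). -/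
open Matrix Kronecker

/-
Row `(i,i)` of `R(z,q)` for `i ∈ {0,2}`, and every column `(j,j)`, vanish off the diagonal, so the
outer factors `R(z₁/z₂)` and `R₂₁(z₁/z₂)` contribute the same scalar to both terms of `D`. What is
left on each side is a sum over `R(z₁z₂)^{ia}_{bj}`; for extremal `i ≠ j` neither the flip
entries nor the entries with `min(b,j) < i < max(b,j)` can occur, so only `(a,b) = (j,i)`
survives and both sides equal `A_{ij} B_{ij} R(z₁z₂)^{ij}_{ij}`.
-/

lemma Pflip_eq_toMatrix_prodComm :
    Pflip = ((Equiv.prodComm (Fin 3) (Fin 3)).toPEquiv.toMatrix :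
      Matrix (Fin 3 × Fin 3) (Fin 3 × Fin 3) ℂ) := by
  ext p r
  simp [Pflip, PEquiv.toMatrix_apply, Prod.ext_iff, eq_comm, and_comm]

lemma R21_apply (z q : ℂ) (i j k l : Fin 3) :
    R21 z q (i, j) (k, l) = Rcg z q (j, i) (l, k) := by
  rw [R21, Pflip_eq_toMatrix_prodComm, PEquiv.toMatrix_toPEquiv_mul,
    PEquiv.mul_toMatrix_toPEquiv]
  rfl

lemma Mleft_apply (M : Matrix (Fin 3) (Fin 3) ℂ) (p r : Fin 3 × Fin 3) :
    Mleft M p r = if p.2 = r.2 then M p.1 r.1 else 0 := by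
  simp [Mleft, one_apply]

lemma Mright_apply (M : Matrix (Fin 3) (Fin 3) ℂ) (p r : Fin 3 × Fin 3) :
    Mright M p r = if p.1 = r.1 then M p.2 r.2 else 0 := by
  simp [Mright, one_apply]

lemma Mleft_mul_mul_Mright_apply (A B : Matrix (Fin 3) (Fin 3) ℂ)
    (X : Matrix (Fin 3 × Fin 3) (Fin 3 × Fin 3) ℂ) (i i' j j' : Fin 3) :
    (Mleft A * X * Mright B) (i, i') (j, j') =
      ∑ a, ∑ b, A i a * X (a, i') (j, b) * B b j' := by
  simp only [mul_apply, Mleft_apply, Mright_apply, ite_mul, mul_ite, zero_mul, mul_zero,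
    Fintype.sum_prod_type, Finset.sum_mul, Finset.sum_ite_eq, Finset.sum_ite_eq',
    Finset.sum_ite_irrel, Finset.sum_const_zero, Finset.mem_univ, ↓reduceIte]
  rw [Finset.sum_comm]

lemma Mright_mul_mul_Mleft_apply (A B : Matrix (Fin 3) (Fin 3) ℂ)
    (X : Matrix (Fin 3 × Fin 3) (Fin 3 × Fin 3) ℂ) (i i' j j' : Fin 3) :
    (Mright B * X * Mleft A) (i, i') (j, j') =
      ∑ a, ∑ b, B i' a * X (i, a) (b, j') * A b j := by
  simp only [mul_apply, Mleft_apply, Mright_apply, ite_mul, mul_ite, zero_mul, mul_zero,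
    Fintype.sum_prod_type, Finset.sum_mul, Finset.sum_ite_eq, Finset.sum_ite_eq',
    Finset.sum_ite_irrel, Finset.sum_const_zero, Finset.mem_univ, ↓reduceIte]
  rw [Finset.sum_comm]

lemma Rcg_apply_self_self (z q : ℂ) (i j : Fin 3) :
    Rcg z q (i, i) (i, i) = Rcg z q (j, j) (j, j) := by
  simp [Rcg]

lemma Rcg_apply_diag_left_eq_zero {i : Fin 3} (hi : i ≠ 1) (z q : ℂ) {r : Fin 3 × Fin 3}
    (hr : r ≠ (i, i)) : Rcg z q (i, i) r = 0 := by
  obtain ⟨k, l⟩ := r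
  fin_cases i <;> fin_cases k <;> fin_cases l <;> simp_all [Rcg]

lemma Rcg_apply_diag_right_eq_zero (z q : ℂ) {p : Fin 3 × Fin 3} {j : Fin 3}
    (hp : p ≠ (j, j)) : Rcg z q p (j, j) = 0 := by
  obtain ⟨k, l⟩ := p
  fin_cases j <;> fin_cases k <;> fin_cases l <;> simp_all [Rcg]

lemma Rcg_apply_eq_zero_of_ne_one {i j a b : Fin 3} (hi : i ≠ 1) (hij : i ≠ j)
    (hab : (a, b) ≠ (j, i)) (z q : ℂ) : Rcg z q (i, a) (b, j) = 0 := by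
  fin_cases i <;> fin_cases j <;> fin_cases a <;> fin_cases b <;> simp_all [Rcg]

lemma Rcg_mul_apply_diag_left {i : Fin 3} (hi : i ≠ 1) (z q : ℂ)
    (X : Matrix (Fin 3 × Fin 3) (Fin 3 × Fin 3) ℂ) (r : Fin 3 × Fin 3) :
    (Rcg z q * X) (i, i) r = Rcg z q (i, i) (i, i) * X (i, i) r := by
  rw [mul_apply, Fintype.sum_eq_single (i, i)]
  intro p hp
  rw [Rcg_apply_diag_left_eq_zero hi z q hp, zero_mul]

lemma mul_R21_apply_diag_right (z q : ℂ) (X : Matrix (Fin 3 × Fin 3) (Fin 3 × Fin 3) ℂ)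
    (p : Fin 3 × Fin 3) (j : Fin 3) :
    (X * R21 z q) p (j, j) = X p (j, j) * Rcg z q (j, j) (j, j) := by
  rw [mul_apply, Fintype.sum_eq_single (j, j), R21_apply]
  rintro ⟨a, b⟩ hab
  have hba : (b, a) ≠ (j, j) := by simpa [and_comm] using hab
  rw [R21_apply, Rcg_apply_diag_right_eq_zero z q hba, mul_zero]

lemma reflection_difference_apply_diag_diag {i j : Fin 3} (hi : i ≠ 1) (hij : i ≠ j)
    (u v q : ℂ) (A B : Matrix (Fin 3) (Fin 3) ℂ) :
    (Rcg u q * Mleft A * R21 v q * Mright B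
      - Mright B * Rcg v q * Mleft A * R21 u q) (i, i) (j, j) = 0 := by
  have hleft : (Mleft A * R21 v q * Mright B) (i, i) (j, j) =
      A i j * Rcg v q (i, j) (i, j) * B i j := by
    rw [Mleft_mul_mul_Mright_apply, ← Fintype.sum_prod_type', Fintype.sum_eq_single (j, i)]
    · rw [R21_apply]
    rintro ⟨a, b⟩ hab
    rw [R21_apply, Rcg_apply_eq_zero_of_ne_one hi hij hab, mul_zero, zero_mul]
  have hright : (Mright B * Rcg v q * Mleft A) (i, i) (j, j) =
      B i j * Rcg v q (i, j) (i, j) * A i j := by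
    rw [Mright_mul_mul_Mleft_apply, ← Fintype.sum_prod_type', Fintype.sum_eq_single (j, i)]
    rintro ⟨a, b⟩ hab
    rw [Rcg_apply_eq_zero_of_ne_one hi hij hab, mul_zero, zero_mul]
  rw [Matrix.sub_apply, mul_assoc, mul_assoc, ← mul_assoc (Mleft A),
    Rcg_mul_apply_diag_left hi, mul_R21_apply_diag_right, hleft, hright,
    Rcg_apply_self_self u q i j]
  ring

theorem reflection_difference_entries_vanish_general (q z₁ z₂ : ℂ) (A B : Matrix (Fin 3) (Fin 3) ℂ) :
    let D := Rcg (z₁ / z₂) q * Mleft A * R21 (z₁ * z₂) q * Mright B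
      - Mright B * Rcg (z₁ * z₂) q * Mleft A * R21 (z₁ / z₂) q
    D (0, 0) (1, 1) = 0 ∧ D (0, 0) (2, 2) = 0 ∧
      D (2, 2) (1, 1) = 0 ∧ D (2, 2) (0, 0) = 0 :=
  ⟨reflection_difference_apply_diag_diag (by decide) (by decide) _ _ _ A B,
    reflection_difference_apply_diag_diag (by decide) (by decide) _ _ _ A B,
    reflection_difference_apply_diag_diag (by decide) (by decide) _ _ _ A B,
    reflection_difference_apply_diag_diag (by decide) (by decide) _ _ _ A B⟩

/-- Four entries of the reflection-equation difference vanish identically. -/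
theorem reflection_difference_entries_vanish (q z₁ z₂ : ℂ) (hq : q ≠ 0)
    (hq2 : q ^ 2 ≠ 1) (hz₁ : z₁ ≠ 0) (hz₂ : z₂ ≠ 0) (hzz : z₁ ^ 2 ≠ z₂ ^ 2)
    (hz₁₂ : z₁ ^ 2 * z₂ ^ 2 ≠ 1) (A B : Matrix (Fin 3) (Fin 3) ℂ) :
    let D := Rcg (z₁ / z₂) q * Mleft A * R21 (z₁ * z₂) q * Mright B
      - Mright B * Rcg (z₁ * z₂) q * Mleft A * R21 (z₁ / z₂) q
    D (0, 0) (1, 1) = 0 ∧ D (0, 0) (2, 2) = 0 ∧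
      D (2, 2) (1, 1) = 0 ∧ D (2, 2) (0, 0) = 0 :=
  reflection_difference_entries_vanish_general q z₁ z₂ A B
end
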